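/- Let G be a hole-free finite connected subgraph of the triangular grid, P a portal, and u, v two vertices not in P. Then some shortest path between u and v in G passes through a vertex of P if and only if u and v lie in different connected components of G − P. Moreover, if u and v are in the same component of G − P, then no shortest path between them passes through P. -/

import Mathlib

/-- The infinite triangular grid on axial coordinates `ℤ × ℤ`, with the six
neighbor directions `±(1,0)`, `±(0,1)`, `±(1,-1)`. -/
def triGrid : SimpleGraph (ℤ × ℤ) where
  Adj u v := (u.1 - v.1, u.2 - v.2) ∈
    ({(1,0), (-1,0), (0,1), (0,-1), (1,-1), (-1,1)} : Set (ℤ × ℤ))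
  symm := by
    constructor
    intro u v h
    simp only [Set.mem_insert_iff, Set.mem_singleton_iff, Prod.mk.injEq] at h ⊢
    omega
  loopless := by
    constructor
    intro u h
    simp only [Set.mem_insert_iff, Set.mem_singleton_iff, Prod.mk.injEq] at h
    omega

/-- The three axis directions of the triangular grid. -/
inductive TriDir | x | y | z
deriving DecidableEq

/-- The two unit vectors of each axis direction. -/
def TriDir.vecs : TriDir → Set (ℤ × ℤ)
  | .x => {(1,0), (-1,0)}
  | .y => {(0,1), (0,-1)}
  | .z => {(1,-1), (-1,1)}

/-- The subgraph of the triangular grid consisting of the edges parallel to axis `d`. -/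
def triDirSub (d : TriDir) : SimpleGraph (ℤ × ℤ) where
  Adj u v := (u.1 - v.1, u.2 - v.2) ∈ d.vecs
  symm := by
    constructor
    intro u v h
    cases d <;>
      (simp only [TriDir.vecs, Set.mem_insert_iff, Set.mem_singleton_iff,
        Prod.mk.injEq] at h ⊢) <;> omega
  loopless := by
    constructor
    intro u h
    cases d <;>
      (simp only [TriDir.vecs, Set.mem_insert_iff, Set.mem_singleton_iff,
        Prod.mk.injEq] at h) <;> omega

variable (V : Set (ℤ × ℤ))

/-- The `d`-portal of a vertex `u ∈ V`: its connected component in the subgraph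
of `G[V]` consisting of the edges parallel to axis `d`. -/
def triPortal (d : TriDir) (u : V) : ((triDirSub d).induce V).ConnectedComponent :=
  ((triDirSub d).induce V).connectedComponentMk u

/-- The `d`-portal graph: vertices are the `d`-portals, two portals being adjacent
iff some edge of `G[V]` joins them. -/
def triPortalGraph (d : TriDir) :
    SimpleGraph (((triDirSub d).induce V).ConnectedComponent) where
  Adj P P' := P ≠ P' ∧ ∃ u v : V, (triGrid.induce V).Adj u v ∧
    triPortal V d u = P ∧ triPortal V d v = P'
  symm := by
    constructor
    rintro P P' ⟨hne, u, v, hadj, hu, hv⟩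
    exact ⟨hne.symm, v, u, hadj.symm, hv, hu⟩
  loopless := by
    constructor
    rintro P ⟨hne, -⟩
    exact hne rfl


namespace PortalProof

open SimpleGraph

lemma adj_iff {a b : ℤ × ℤ} : triGrid.Adj a b ↔
    ((a.1 - b.1 = 1 ∧ a.2 - b.2 = 0) ∨ (a.1 - b.1 = -1 ∧ a.2 - b.2 = 0) ∨
     (a.1 - b.1 = 0 ∧ a.2 - b.2 = 1) ∨ (a.1 - b.1 = 0 ∧ a.2 - b.2 = -1) ∨
     (a.1 - b.1 = 1 ∧ a.2 - b.2 = -1) ∨ (a.1 - b.1 = -1 ∧ a.2 - b.2 = 1)) := by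
  show (a.1 - b.1, a.2 - b.2) ∈ ({(1,0), (-1,0), (0,1), (0,-1), (1,-1), (-1,1)} : Set (ℤ × ℤ)) ↔ _
  simp only [Set.mem_insert_iff, Set.mem_singleton_iff, Prod.mk.injEq]

def stepSum (F : ℤ × ℤ → ℤ × ℤ → ℤ) : {a b : ℤ × ℤ} → triGrid.Walk a b → ℤ
  | _, _, SimpleGraph.Walk.nil => 0
  | a, _, SimpleGraph.Walk.cons (v := c) _ p => F a c + stepSum F p

@[simp] lemma stepSum_nil (F : ℤ × ℤ → ℤ × ℤ → ℤ) (a : ℤ × ℤ) :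
    stepSum F (SimpleGraph.Walk.nil : triGrid.Walk a a) = 0 := rfl

@[simp] lemma stepSum_cons (F : ℤ × ℤ → ℤ × ℤ → ℤ) {a c b : ℤ × ℤ}
    (h : triGrid.Adj a c) (p : triGrid.Walk c b) :
    stepSum F (SimpleGraph.Walk.cons h p) = F a c + stepSum F p := rfl

lemma stepSum_append (F : ℤ × ℤ → ℤ × ℤ → ℤ) {a b c : ℤ × ℤ}
    (p : triGrid.Walk a b) (q : triGrid.Walk b c) :
    stepSum F (p.append q) = stepSum F p + stepSum F q := by
  induction p with
  | nil => simp
  | cons h p ih => simp [SimpleGraph.Walk.cons_append, ih]; ring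

lemma stepSum_sub (F G : ℤ × ℤ → ℤ × ℤ → ℤ) {a b : ℤ × ℤ} (p : triGrid.Walk a b) :
    stepSum (fun x y => F x y - G x y) p = stepSum F p - stepSum G p := by
  induction p with
  | nil => simp
  | cons h p ih => simp [ih]; ring

lemma stepSum_eq_of_telescope (F : ℤ × ℤ → ℤ × ℤ → ℤ) (g : ℤ × ℤ → ℤ)
    {a b : ℤ × ℤ} (p : triGrid.Walk a b)
    (h : ∀ x y, triGrid.Adj x y → x ∈ p.support → y ∈ p.support → F x y = g y - g x) :
    stepSum F p = g b - g a := by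
  induction p with
  | nil => simp
  | @cons a c b hadj p ih =>
      rw [stepSum_cons, h a c hadj (by simp) (by simp),
        ih (fun x y hxy hx hy => h x y hxy (by simp [hx]) (by simp [hy]))]
      ring

lemma stepSum_eq_zero (F : ℤ × ℤ → ℤ × ℤ → ℤ)
    {a b : ℤ × ℤ} (p : triGrid.Walk a b)
    (h : ∀ x y, triGrid.Adj x y → x ∈ p.support → y ∈ p.support → F x y = 0) :
    stepSum F p = 0 := by
  have := stepSum_eq_of_telescope F (fun _ => 0) p (by simpa using h)
  simpa using this

def windStep (z a b : ℤ × ℤ) : ℤ :=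
  (if b.2 = z.2 ∧ a.2 = z.2 - 1 ∧ a.1 ≤ z.1 then 1 else 0)
  - (if a.2 = z.2 ∧ b.2 = z.2 - 1 ∧ b.1 ≤ z.1 then 1 else 0)

def windWalk (z : ℤ × ℤ) {a b : ℤ × ℤ} (p : triGrid.Walk a b) : ℤ :=
  stepSum (windStep z) p

lemma diff_h (z x y : ℤ × ℤ)
    (hxz : x ≠ z) (hxz' : x ≠ (z.1 + 1, z.2)) (hyz : y ≠ z) (hyz' : y ≠ (z.1 + 1, z.2))
    (hxy : triGrid.Adj x y) :
    windStep z x y - windStep (z.1 + 1, z.2) x y = 0 := by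
  rw [adj_iff] at hxy
  have h1 : ¬(x.1 = z.1 ∧ x.2 = z.2) := fun h => hxz (Prod.ext h.1 h.2)
  have h2 : ¬(x.1 = z.1 + 1 ∧ x.2 = z.2) := fun h => hxz' (Prod.ext h.1 h.2)
  have h3 : ¬(y.1 = z.1 ∧ y.2 = z.2) := fun h => hyz (Prod.ext h.1 h.2)
  have h4 : ¬(y.1 = z.1 + 1 ∧ y.2 = z.2) := fun h => hyz' (Prod.ext h.1 h.2)
  obtain ⟨x1, x2⟩ := x; obtain ⟨y1, y2⟩ := y; obtain ⟨zx, zy⟩ := z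
  simp only [windStep] at *
  split_ifs <;> omega

lemma diff_v (z x y : ℤ × ℤ)
    (hxz : x ≠ z) (hyz : y ≠ z)
    (hxy : triGrid.Adj x y) :
    windStep z x y - windStep (z.1, z.2 + 1) x y =
      (if y.2 = z.2 ∧ y.1 ≤ z.1 then 1 else 0) - (if x.2 = z.2 ∧ x.1 ≤ z.1 then 1 else 0) := by
  rw [adj_iff] at hxy
  have h1 : ¬(x.1 = z.1 ∧ x.2 = z.2) := fun h => hxz (Prod.ext h.1 h.2)
  have h3 : ¬(y.1 = z.1 ∧ y.2 = z.2) := fun h => hyz (Prod.ext h.1 h.2)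
  obtain ⟨x1, x2⟩ := x; obtain ⟨y1, y2⟩ := y; obtain ⟨zx, zy⟩ := z
  simp only [windStep] at *
  split_ifs <;> omega

lemma diff_d (z x y : ℤ × ℤ)
    (hxz : x ≠ z) (hyz : y ≠ z)
    (hxy : triGrid.Adj x y) :
    windStep z x y - windStep (z.1 - 1, z.2 + 1) x y =
      (if y.2 = z.2 ∧ y.1 ≤ z.1 - 1 then 1 else 0)
      - (if x.2 = z.2 ∧ x.1 ≤ z.1 - 1 then 1 else 0) := by
  rw [adj_iff] at hxy
  have h1 : ¬(x.1 = z.1 ∧ x.2 = z.2) := fun h => hxz (Prod.ext h.1 h.2)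
  have h3 : ¬(y.1 = z.1 ∧ y.2 = z.2) := fun h => hyz (Prod.ext h.1 h.2)
  obtain ⟨x1, x2⟩ := x; obtain ⟨y1, y2⟩ := y; obtain ⟨zx, zy⟩ := z
  simp only [windStep] at *
  split_ifs <;> omega

lemma wind_eq_h {z : ℤ × ℤ} {a : ℤ × ℤ} (p : triGrid.Walk a a)
    (hz : z ∉ p.support) (hz' : (z.1 + 1, z.2) ∉ p.support) :
    windWalk z p = windWalk (z.1 + 1, z.2) p := by
  have h0 : stepSum (fun x y => windStep z x y - windStep (z.1 + 1, z.2) x y) p = 0 :=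
    stepSum_eq_zero _ p (fun x y hxy hx hy =>
      diff_h z x y (fun h => hz (h ▸ hx)) (fun h => hz' (h ▸ hx))
        (fun h => hz (h ▸ hy)) (fun h => hz' (h ▸ hy)) hxy)
  have h1 := stepSum_sub (windStep z) (windStep (z.1 + 1, z.2)) p
  rw [h0] at h1
  unfold windWalk
  omega

lemma wind_eq_v {z : ℤ × ℤ} {a : ℤ × ℤ} (p : triGrid.Walk a a)
    (hz : z ∉ p.support) :
    windWalk z p = windWalk (z.1, z.2 + 1) p := by
  have h0 : stepSum (fun x y => windStep z x y - windStep (z.1, z.2 + 1) x y) p = 0 := by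
    have := stepSum_eq_of_telescope
      (fun x y => windStep z x y - windStep (z.1, z.2 + 1) x y)
      (fun w => if w.2 = z.2 ∧ w.1 ≤ z.1 then 1 else 0) p
      (fun x y hxy hx hy =>
        diff_v z x y (fun h => hz (h ▸ hx)) (fun h => hz (h ▸ hy)) hxy)
    simpa using this
  have h1 := stepSum_sub (windStep z) (windStep (z.1, z.2 + 1)) p
  rw [h0] at h1
  unfold windWalk
  omega

lemma wind_eq_d {z : ℤ × ℤ} {a : ℤ × ℤ} (p : triGrid.Walk a a)
    (hz : z ∉ p.support) :
    windWalk z p = windWalk (z.1 - 1, z.2 + 1) p := by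
  have h0 : stepSum (fun x y => windStep z x y - windStep (z.1 - 1, z.2 + 1) x y) p = 0 := by
    have := stepSum_eq_of_telescope
      (fun x y => windStep z x y - windStep (z.1 - 1, z.2 + 1) x y)
      (fun w => if w.2 = z.2 ∧ w.1 ≤ z.1 - 1 then 1 else 0) p
      (fun x y hxy hx hy =>
        diff_d z x y (fun h => hz (h ▸ hx)) (fun h => hz (h ▸ hy)) hxy)
    simpa using this
  have h1 := stepSum_sub (windStep z) (windStep (z.1 - 1, z.2 + 1)) p
  rw [h0] at h1
  unfold windWalk
  omega

lemma windWalk_eq_of_adj {z z' : ℤ × ℤ} (hzz' : triGrid.Adj z z') {a : ℤ × ℤ}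
    (p : triGrid.Walk a a) (hz : z ∉ p.support) (hz' : z' ∉ p.support) :
    windWalk z p = windWalk z' p := by
  rcases adj_iff.mp hzz' with h | h | h | h | h | h
  · -- z - z' = (1,0), so z = (z'.1+1, z'.2)
    have e : z = (z'.1 + 1, z'.2) := Prod.ext (by omega) (by omega)
    rw [e]
    exact (wind_eq_h (z := z') p hz' (by rw [← e]; exact hz)).symm
  · have e : z' = (z.1 + 1, z.2) := Prod.ext (by omega) (by omega)
    rw [e]; exact wind_eq_h p hz (e ▸ hz')
  · -- z.2 - z'.2 = 1, z.1 = z'.1 : z = z' + (0,1)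
    have e : z = (z'.1, z'.2 + 1) := Prod.ext (by omega) (by omega)
    rw [e]; exact (wind_eq_v p hz').symm
  · have e : z' = (z.1, z.2 + 1) := Prod.ext (by omega) (by omega)
    rw [e]; exact wind_eq_v p hz
  · -- z - z' = (1,-1): z' = (z.1 - 1, z.2 + 1)
    have e : z' = (z.1 - 1, z.2 + 1) := Prod.ext (by omega) (by omega)
    rw [e]; exact wind_eq_d p hz
  · have e : z = (z'.1 - 1, z'.2 + 1) := Prod.ext (by omega) (by omega)
    rw [e]; exact (wind_eq_d p hz').symm

lemma windWalk_far {z : ℤ × ℤ} {a : ℤ × ℤ} (p : triGrid.Walk a a)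
    (h : ∀ w ∈ p.support, w.2 < z.2 - 1) :
    windWalk z p = 0 := by
  apply stepSum_eq_zero
  intro x y hxy hx hy
  have := h x hx
  have := h y hy
  simp only [windStep]
  split_ifs <;> omega

lemma windWalk_eq_along {z z' : ℤ × ℤ} {a : ℤ × ℤ} (p : triGrid.Walk a a)
    (q : triGrid.Walk z z') (hq : ∀ w ∈ q.support, w ∉ p.support) :
    windWalk z p = windWalk z' p := by
  induction q with
  | nil => rfl
  | @cons z c z' hadj q ih =>
      rw [windWalk_eq_of_adj hadj p (hq z (by simp)) (hq c (by simp))]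
      exact ih (fun w hw => hq w (by simp [hw]))

/-- Lift a walk in an induced subgraph to a walk in `triGrid`. -/
def liftWalk {S : Set (ℤ × ℤ)} : ∀ {x y : S}, (triGrid.induce S).Walk x y →
    triGrid.Walk x.val y.val
  | _, _, SimpleGraph.Walk.nil => SimpleGraph.Walk.nil
  | _, _, SimpleGraph.Walk.cons h p => SimpleGraph.Walk.cons h (liftWalk p)

lemma liftWalk_support {S : Set (ℤ × ℤ)} {x y : S} (p : (triGrid.induce S).Walk x y) :
    ∀ w ∈ (liftWalk p).support, w ∈ S := by
  induction p with
  | nil =>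
      intro w hw
      simp only [liftWalk, SimpleGraph.Walk.support_nil, List.mem_singleton] at hw
      exact hw ▸ (Subtype.coe_prop _)
  | @cons a c b h p ih =>
      intro w hw
      simp only [liftWalk, SimpleGraph.Walk.support_cons, List.mem_cons] at hw
      change w ∈ (a.val :: (liftWalk p).support) at hw
      rw [List.mem_cons] at hw
      rcases hw with rfl | hw
      · exact a.2
      · exact ih w hw

lemma liftWalk_length {S : Set (ℤ × ℤ)} {x y : S} (p : (triGrid.induce S).Walk x y) :
    (liftWalk p).length = p.length := by
  induction p with
  | nil => rfl
  | cons h p ih => simp [liftWalk, ih]; exact congrArg (· + 1) ih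

/-- Key: winding number of a closed walk inside `V` around any point outside `V`
is zero, provided `Vᶜ` is connected (no holes) and `V` is finite. -/
lemma wind_zero_of_notin {V : Set (ℤ × ℤ)} (hfin : V.Finite)
    (hnohole : (triGrid.induce Vᶜ).Connected)
    {a : ℤ × ℤ} (p : triGrid.Walk a a) (hp : ∀ w ∈ p.support, w ∈ V)
    {z : ℤ × ℤ} (hz : z ∉ V) : windWalk z p = 0 := by
  obtain ⟨M, hM⟩ : ∃ M, ∀ w ∈ V, w.2 ≤ M := by
    obtain ⟨M, hM⟩ := (hfin.image Prod.snd).bddAbove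
    exact ⟨M, fun w hw => hM ⟨w, hw, rfl⟩⟩
  have hz' : ((0 : ℤ), M + 2) ∉ V := fun h => by have := hM _ h; omega
  have hreach : (triGrid.induce Vᶜ).Reachable ⟨z, hz⟩ ⟨((0 : ℤ), M + 2), hz'⟩ :=
    hnohole.preconnected _ _
  obtain ⟨q⟩ := hreach
  have h1 : windWalk z p = windWalk ((0 : ℤ), M + 2) p := by
    apply windWalk_eq_along p (liftWalk q)
    intro w hw hwp
    exact (liftWalk_support q w hw) (hp w hwp)
  rw [h1]
  apply windWalk_far
  intro w hw
  have := hM w (hp w hw)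
  omega


section Extract
variable {α : Type*} {G : SimpleGraph α} (Q : α → Prop)

lemma exists_entry : ∀ {u v : α} (w : G.Walk u v), ¬ Q u → (∃ x ∈ w.support, Q x) →
    ∃ (t p : α) (h : G.Adj t p) (w1 : G.Walk u t) (w2 : G.Walk p v),
      w.length = w1.length + 1 + w2.length ∧ Q p ∧ ¬ Q t ∧ ∀ x ∈ w1.support, ¬ Q x := by
  intro u v w
  induction w with
  | nil =>
      intro hu hex
      obtain ⟨x, hx, hQx⟩ := hex
      simp only [SimpleGraph.Walk.support_nil, List.mem_singleton] at hx
      exact absurd (hx ▸ hQx) hu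
  | @cons u c v h w ih =>
      intro hu hex
      by_cases hc : Q c
      · exact ⟨u, c, h, SimpleGraph.Walk.nil, w, by simp; ring, hc, hu, by simp [hu]⟩
      · have hex' : ∃ x ∈ w.support, Q x := by
          obtain ⟨x, hx, hQx⟩ := hex
          simp only [SimpleGraph.Walk.support_cons, List.mem_cons] at hx
          rcases hx with rfl | hx
          · exact absurd hQx hu
          · exact ⟨x, hx, hQx⟩
        obtain ⟨t, p, hadj, w1, w2, hlen, hQp, hQt, hfree⟩ := ih hc hex'
        refine ⟨t, p, hadj, SimpleGraph.Walk.cons h w1, w2, by simp [hlen]; ring, hQp, hQt, ?_⟩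
        intro x hx
        simp only [SimpleGraph.Walk.support_cons, List.mem_cons] at hx
        rcases hx with rfl | hx
        · exact hu
        · exact hfree x hx

lemma exists_decomp {u v : α} (w : G.Walk u v) (hu : ¬ Q u) (hv : ¬ Q v)
    (hex : ∃ x ∈ w.support, Q x) :
    ∃ (t p q s : α) (h1 : G.Adj t p) (h2 : G.Adj q s)
      (w1 : G.Walk u t) (w2 : G.Walk p q) (w3 : G.Walk s v),
      w.length = w1.length + 1 + w2.length + 1 + w3.length ∧ Q p ∧ Q q ∧ ¬ Q t ∧ ¬ Q s ∧
      (∀ x ∈ w1.support, ¬ Q x) ∧ (∀ x ∈ w3.support, ¬ Q x) := by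
  obtain ⟨t, p, hadj, w1, w2, hlen, hQp, hQt, hfree⟩ := exists_entry Q w hu hex
  obtain ⟨s, q, hadj2, w3r, w2r, hlen2, hQq, hQs, hfree2⟩ :=
    exists_entry Q w2.reverse hv ⟨p, by simp, hQp⟩
  refine ⟨t, p, q, s, hadj, hadj2.symm, w1, w2r.reverse, w3r.reverse, ?_, hQp, hQq, hQt, hQs,
    hfree, ?_⟩
  · have : w2.length = w2.reverse.length := by simp
    rw [hlen, this, hlen2]
    simp only [SimpleGraph.Walk.length_reverse]
    ring
  · intro x hx
    exact hfree2 x (by simpa using hx)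

end Extract

lemma adj_east {x b : ℤ} : triGrid.Adj (x, b) (x + 1, b) := by
  rw [adj_iff]; omega

/-- horizontal straight walk in triGrid. -/
def segWalk (x b : ℤ) : (n : ℕ) → triGrid.Walk (x, b) (x + n, b)
  | 0 => SimpleGraph.Walk.nil.copy rfl (by simp)
  | n+1 => (SimpleGraph.Walk.cons adj_east ((segWalk (x+1) b n).copy rfl
      (by rw [Prod.mk.injEq]; refine ⟨by push_cast; ring, rfl⟩)))

lemma segWalk_support (x b : ℤ) (n : ℕ) :
    ∀ w ∈ (segWalk x b n).support, w.2 = b ∧ x ≤ w.1 ∧ w.1 ≤ x + n := by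
  induction n generalizing x with
  | zero =>
      intro w hw
      simp only [segWalk, SimpleGraph.Walk.support_copy, SimpleGraph.Walk.support_nil,
        List.mem_singleton] at hw
      subst hw; simp
  | succ n ih =>
      intro w hw
      simp only [segWalk, SimpleGraph.Walk.support_cons, SimpleGraph.Walk.support_copy,
        List.mem_cons] at hw
      rcases hw with rfl | hw
      · simp; omega
      · obtain ⟨h1, h2, h3⟩ := ih (x+1) w hw
        refine ⟨h1, by omega, by push_cast at h3 ⊢; omega⟩

lemma windStep_horiz (z a b : ℤ × ℤ) (h : a.2 = b.2) : windStep z a b = 0 := by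
  simp only [windStep]; split_ifs <;> omega

/-- length lower bound by x-displacement. -/
lemma length_ge_dx {a b : ℤ × ℤ} (p : triGrid.Walk a b) :
    (b.1 - a.1 ≤ p.length) ∧ (a.1 - b.1 ≤ p.length) := by
  induction p with
  | nil => simp
  | @cons a c b h p ih =>
      have := adj_iff.mp h
      simp only [SimpleGraph.Walk.length_cons]
      push_cast
      omega

/-- a row walk inside the induced graph, given all row points are in V. -/
lemma rowWalkInd (V : Set (ℤ × ℤ)) (b : ℤ) : ∀ (n : ℕ) (x : ℤ)
    (hmem : ∀ k : ℕ, k ≤ n → ((x + k : ℤ), b) ∈ V) (hx : (x, b) ∈ V)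
    (he : ((x + n : ℤ), b) ∈ V),
    ∃ w : (triGrid.induce V).Walk ⟨(x, b), hx⟩ ⟨((x + n : ℤ), b), he⟩, w.length = n := by
  intro n
  induction n with
  | zero =>
      intro x hmem hx he
      have : ((x : ℤ), b) = ((x + (0 : ℕ) : ℤ), b) := by simp
      exact ⟨(SimpleGraph.Walk.nil).copy rfl (Subtype.ext (by simp)), by simp⟩
  | succ n ih =>
      intro x hmem hx he
      have h1 : ((x + 1 : ℤ), b) ∈ V := by
        have h := hmem 1 (by omega); convert h using 2 <;> (push_cast; ring)
      have he' : ((x + 1 + n : ℤ), b) ∈ V := by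
        have : ((x + (n+1 : ℕ) : ℤ), b) ∈ V := he
        convert this using 2 <;> (push_cast; ring)
      obtain ⟨w, hw⟩ := ih (x + 1) (fun k hk => by
        have h := hmem (k+1) (by omega); convert h using 2 <;> (push_cast; ring)) h1 he'
      have hadj : (triGrid.induce V).Adj ⟨(x, b), hx⟩ ⟨((x + 1 : ℤ), b), h1⟩ := adj_east
      refine ⟨(SimpleGraph.Walk.cons hadj w).copy rfl (Subtype.ext (by rw [Prod.mk.injEq]; exact ⟨by omega, rfl⟩)), ?_⟩
      simp [hw]


/-- membership in the portal strip -/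
def Pmem (a0 a1 b0 : ℤ) (w : ℤ × ℤ) : Prop := w.2 = b0 ∧ a0 ≤ w.1 ∧ w.1 ≤ a1

lemma exists_rowWalkTri (b xx yy : ℤ) : ∃ w : triGrid.Walk (xx, b) (yy, b),
    ∀ v ∈ w.support, v.2 = b ∧ ((xx ≤ v.1 ∧ v.1 ≤ yy) ∨ (yy ≤ v.1 ∧ v.1 ≤ xx)) := by
  rcases le_total xx yy with hle | hle
  · have hcast : ((xx + ((yy - xx).toNat : ℤ)), b) = (yy, b) := by
      rw [Prod.mk.injEq]; exact ⟨by omega, rfl⟩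
    refine ⟨(segWalk xx b (yy - xx).toNat).copy rfl hcast, ?_⟩
    intro v hv
    rw [SimpleGraph.Walk.support_copy] at hv
    obtain ⟨h1, h2, h3⟩ := segWalk_support _ _ _ v hv
    exact ⟨h1, Or.inl ⟨h2, by omega⟩⟩
  · have hcast : ((yy + ((xx - yy).toNat : ℤ)), b) = (xx, b) := by
      rw [Prod.mk.injEq]; exact ⟨by omega, rfl⟩
    refine ⟨((segWalk yy b (xx - yy).toNat).copy rfl hcast).reverse, ?_⟩
    intro v hv
    rw [SimpleGraph.Walk.support_reverse, List.mem_reverse, SimpleGraph.Walk.support_copy] at hv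
    obtain ⟨h1, h2, h3⟩ := segWalk_support _ _ _ v hv
    exact ⟨h1, Or.inr ⟨h2, by omega⟩⟩

section Bash
variable (a0 a1 b0 g : ℤ)

/-- indicator of the west part of the portal row -/
def indW (a0 b0 : ℤ) (w : ℤ × ℤ) : ℤ := if w.2 = b0 ∧ w.1 ≤ a0 - 2 then 1 else 0

/-- the A2 step functional -/
def DA (a0 b0 g : ℤ) (x y : ℤ × ℤ) : ℤ :=
  windStep (g, b0 + 1) x y - windStep (a0 - 1, b0) x y + (indW a0 b0 y - indW a0 b0 x)

/-- the B step functional -/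
def DB (a0 a1 b0 : ℤ) (x y : ℤ × ℤ) : ℤ :=
  windStep (a1 + 1, b0) x y - windStep (a0 - 1, b0) x y

lemma DA_rho (x y : ℤ × ℤ) (hxy : triGrid.Adj x y)
    (hga : a0 - 1 ≤ g) (hgb : g ≤ a1)
    (hx : x.2 = b0 → (x.1 ≤ a0 - 2 ∨ a1 + 2 ≤ x.1))
    (hy : y.2 = b0 → (y.1 ≤ a0 - 2 ∨ a1 + 2 ≤ y.1)) :
    DA a0 b0 g x y = 0 := by
  rw [adj_iff] at hxy
  obtain ⟨x1, x2⟩ := x; obtain ⟨y1, y2⟩ := y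
  simp only [DA, indW, windStep] at *
  split_ifs <;> omega

lemma DA_mid (x y : ℤ × ℤ) (hxy : triGrid.Adj x y)
    (hx : x.2 = b0 ∧ a0 ≤ x.1) (hy : y.2 = b0 ∧ a0 ≤ y.1) :
    DA a0 b0 g x y = 0 := by
  rw [adj_iff] at hxy
  obtain ⟨x1, x2⟩ := x; obtain ⟨y1, y2⟩ := y
  simp only [DA, indW, windStep] at *
  split_ifs <;> omega

lemma DA_tp (t p : ℤ × ℤ) (hxy : triGrid.Adj t p)
    (ht : t.2 = b0 + 1) (hp : p.2 = b0) (hpa : a0 ≤ p.1) :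
    DA a0 b0 g t p = -(if p.1 ≤ g then 1 else 0) := by
  rw [adj_iff] at hxy
  obtain ⟨x1, x2⟩ := t; obtain ⟨y1, y2⟩ := p
  simp only [DA, indW, windStep] at *
  split_ifs <;> omega

lemma DA_qs (q s : ℤ × ℤ) (hxy : triGrid.Adj q s)
    (hq : q.2 = b0) (hs : s.2 = b0 + 1) (hqa : a0 ≤ q.1) :
    DA a0 b0 g q s = (if q.1 ≤ g then 1 else 0) := by
  rw [adj_iff] at hxy
  obtain ⟨x1, x2⟩ := q; obtain ⟨y1, y2⟩ := s
  simp only [DA, indW, windStep] at *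
  split_ifs <;> omega

lemma DB_rho (x y : ℤ × ℤ) (hxy : triGrid.Adj x y) (haa : a0 ≤ a1)
    (hx : x.2 = b0 → (x.1 ≤ a0 - 2 ∨ a1 + 2 ≤ x.1))
    (hy : y.2 = b0 → (y.1 ≤ a0 - 2 ∨ a1 + 2 ≤ y.1)) :
    DB a0 a1 b0 x y = 0 := by
  rw [adj_iff] at hxy
  obtain ⟨x1, x2⟩ := x; obtain ⟨y1, y2⟩ := y
  simp only [DB, windStep] at *
  split_ifs <;> omega

lemma DB_mid (x y : ℤ × ℤ) (hxy : triGrid.Adj x y)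
    (hx : x.2 = b0 ∧ a0 ≤ x.1 ∧ x.1 ≤ a1) (hy : y.2 = b0 ∧ a0 ≤ y.1 ∧ y.1 ≤ a1) :
    DB a0 a1 b0 x y = 0 := by
  rw [adj_iff] at hxy
  obtain ⟨x1, x2⟩ := x; obtain ⟨y1, y2⟩ := y
  simp only [DB, windStep] at *
  split_ifs <;> omega

lemma DB_tp (t p : ℤ × ℤ) (hxy : triGrid.Adj t p)
    (ht : t.2 = b0 + 1) (hp : p.2 = b0) (hpa : a0 ≤ p.1) (hpb : p.1 ≤ a1) :
    DB a0 a1 b0 t p = 0 := by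
  rw [adj_iff] at hxy
  obtain ⟨x1, x2⟩ := t; obtain ⟨y1, y2⟩ := p
  simp only [DB, windStep] at *
  split_ifs <;> omega

lemma DB_qs (q s : ℤ × ℤ) (hxy : triGrid.Adj q s)
    (hq : q.2 = b0) (hs : s.2 = b0 - 1) (hqa : a0 ≤ q.1) (hqb : q.1 ≤ a1) :
    DB a0 a1 b0 q s = -1 := by
  rw [adj_iff] at hxy
  obtain ⟨x1, x2⟩ := q; obtain ⟨y1, y2⟩ := s
  simp only [DB, windStep] at *
  split_ifs <;> omega

end Bash

lemma stepSum_add (F G : ℤ × ℤ → ℤ × ℤ → ℤ) {a b : ℤ × ℤ} (p : triGrid.Walk a b) :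
    stepSum (fun x y => F x y + G x y) p = stepSum F p + stepSum G p := by
  induction p with
  | nil => simp
  | cons h p ih => simp [ih]; ring

lemma inner_top (V : Set (ℤ × ℤ)) (hfin : V.Finite)
    (hnohole : (triGrid.induce Vᶜ).Connected)
    (a0 a1 b0 : ℤ) (hPV : ∀ x : ℤ, a0 ≤ x → x ≤ a1 → (x, b0) ∈ V)
    (hgl : (a0 - 1, b0) ∉ V) (hgr : (a1 + 1, b0) ∉ V)
    (u v t p q s : V)
    (h1 : (triGrid.induce V).Adj t p) (h2 : (triGrid.induce V).Adj q s)
    (w1 : (triGrid.induce V).Walk u t) (w2 : (triGrid.induce V).Walk p q)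
    (w3 : (triGrid.induce V).Walk s v)
    (hp : Pmem a0 a1 b0 p.val) (hq : Pmem a0 a1 b0 q.val)
    (ρ : triGrid.Walk s.val t.val) (hρ : ∀ w ∈ ρ.support, w ∈ V ∧ ¬ Pmem a0 a1 b0 w)
    (httop : t.val.2 = b0 + 1) (hsP : ¬ Pmem a0 a1 b0 s.val) :
    ∃ W : (triGrid.induce V).Walk u v, W.length < w1.length + 1 + w2.length + 1 + w3.length := by
  classical
  have htp : triGrid.Adj t.val p.val := h1
  have hqs : triGrid.Adj q.val s.val := h2
  have hadj_tp := adj_iff.mp htp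
  have hadj_qs := adj_iff.mp hqs
  have hWE : ∀ w : ℤ × ℤ, w ∈ V → ¬ Pmem a0 a1 b0 w → w.2 = b0 →
      (w.1 ≤ a0 - 2 ∨ a1 + 2 ≤ w.1) := by
    intro w hwV hwP hw2
    by_contra hcon
    push_neg at hcon
    have hw1 : w.1 = a0 - 1 ∨ w.1 = a1 + 1 := by
      simp only [Pmem, not_and, not_le] at hwP
      omega
    rcases hw1 with h | h
    · exact hgl (by rw [show ((a0 - 1 : ℤ), b0) = w from (Prod.ext h hw2).symm]; exact hwV)
    · exact hgr (by rw [show ((a1 + 1 : ℤ), b0) = w from (Prod.ext h hw2).symm]; exact hwV)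
  -- the straight middle walk
  obtain ⟨mid0, hmid0⟩ := exists_rowWalkTri b0 p.val.1 q.val.1
  have hpcast : (p.val.1, b0) = p.val := Prod.ext rfl hp.1.symm
  have hqcast : (q.val.1, b0) = q.val := Prod.ext rfl hq.1.symm
  set mid := mid0.copy hpcast hqcast with hmiddef
  have hmidsup : ∀ x ∈ mid.support, x.2 = b0 ∧ a0 ≤ x.1 ∧ x.1 ≤ a1 := by
    intro x hx
    rw [hmiddef, SimpleGraph.Walk.support_copy] at hx
    obtain ⟨hh1, hh2⟩ := hmid0 x hx
    have := hp.2.1; have := hp.2.2; have := hq.2.1; have := hq.2.2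
    exact ⟨hh1, by omega, by omega⟩
  -- s is on the top row or the bottom row
  have hs2 : s.val.2 = b0 + 1 ∨ s.val.2 = b0 - 1 := by
    by_cases h : s.val.2 = b0
    · exfalso
      have h1' : s.val.1 ≤ a0 - 2 ∨ a1 + 2 ≤ s.val.1 := hWE s.val s.2 hsP h
      have := hq.1; have := hq.2.1; have := hq.2.2
      omega
    · have := hq.1
      omega
  rcases hs2 with hstop | hsbot
  · -- both contacts on top
    by_cases hgap : ∀ x : ℤ,
        ((t.val.1 ≤ x ∧ x ≤ s.val.1) ∨ (s.val.1 ≤ x ∧ x ≤ t.val.1)) → (x, b0 + 1) ∈ V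
    · -- no gap: shortcut along the top row
      have hlen2 : ((q.val.1 - p.val.1 : ℤ) ≤ w2.length) ∧ ((p.val.1 - q.val.1 : ℤ) ≤ w2.length) := by
        have h := length_ge_dx (liftWalk w2)
        rwa [liftWalk_length] at h
      have hbound : ∀ sc : (triGrid.induce V).Walk t s,
          (sc.length : ℤ) ≤ (s.val.1 - t.val.1) ∨ (sc.length : ℤ) ≤ (t.val.1 - s.val.1) →
          ∃ W : (triGrid.induce V).Walk u v,
            W.length < w1.length + 1 + w2.length + 1 + w3.length := by
        intro sc hsc
        refine ⟨w1.append (sc.append w3), ?_⟩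
        rw [SimpleGraph.Walk.length_append, SimpleGraph.Walk.length_append]
        have : (sc.length : ℤ) < w2.length + 2 := by
          have e1 := hp.1; have e2 := hq.1
          omega
        omega
      rcases le_total t.val.1 s.val.1 with hts | hts
      · have hmem : ∀ k : ℕ, k ≤ (s.val.1 - t.val.1).toNat →
            ((t.val.1 + k : ℤ), b0 + 1) ∈ V := by
          intro k hk
          apply hgap
          left
          omega
        have hx : (t.val.1, b0 + 1) ∈ V := by
          rw [show ((t.val.1 : ℤ), b0 + 1) = t.val from Prod.ext rfl httop.symm]
          exact t.2
        have he : ((t.val.1 + ((s.val.1 - t.val.1).toNat : ℤ)), b0 + 1) ∈ V := by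
          rw [show ((t.val.1 + ((s.val.1 - t.val.1).toNat : ℤ)), b0 + 1) = s.val from
            Prod.ext (by omega) hstop.symm]
          exact s.2
        obtain ⟨w0, hw0⟩ := rowWalkInd V (b0 + 1) (s.val.1 - t.val.1).toNat t.val.1 hmem hx he
        have ct : (⟨(t.val.1, b0 + 1), hx⟩ : V) = t :=
          Subtype.ext (Prod.ext rfl httop.symm)
        have cs : (⟨((t.val.1 + ((s.val.1 - t.val.1).toNat : ℤ)), b0 + 1), he⟩ : V) = s :=
          Subtype.ext (show ((t.val.1 + ((s.val.1 - t.val.1).toNat : ℤ)), b0 + 1) = s.val from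
            Prod.ext (by omega) hstop.symm)
        refine hbound (w0.copy ct cs) (Or.inl ?_)
        rw [SimpleGraph.Walk.length_copy, hw0]
        omega
      · have hmem : ∀ k : ℕ, k ≤ (t.val.1 - s.val.1).toNat →
            ((s.val.1 + k : ℤ), b0 + 1) ∈ V := by
          intro k hk
          apply hgap
          right
          omega
        have hx : (s.val.1, b0 + 1) ∈ V := by
          rw [show ((s.val.1 : ℤ), b0 + 1) = s.val from Prod.ext rfl hstop.symm]
          exact s.2
        have he : ((s.val.1 + ((t.val.1 - s.val.1).toNat : ℤ)), b0 + 1) ∈ V := by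
          rw [show ((s.val.1 + ((t.val.1 - s.val.1).toNat : ℤ)), b0 + 1) = t.val from
            Prod.ext (by omega) httop.symm]
          exact t.2
        obtain ⟨w0, hw0⟩ := rowWalkInd V (b0 + 1) (t.val.1 - s.val.1).toNat s.val.1 hmem hx he
        have cs : (⟨(s.val.1, b0 + 1), hx⟩ : V) = s :=
          Subtype.ext (Prod.ext rfl hstop.symm)
        have ct : (⟨((s.val.1 + ((t.val.1 - s.val.1).toNat : ℤ)), b0 + 1), he⟩ : V) = t :=
          Subtype.ext (show ((s.val.1 + ((t.val.1 - s.val.1).toNat : ℤ)), b0 + 1) = t.val from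
            Prod.ext (by omega) httop.symm)
        refine hbound ((w0.copy cs ct).reverse) (Or.inr ?_)
        rw [SimpleGraph.Walk.length_reverse, SimpleGraph.Walk.length_copy, hw0]
        omega
    · -- gap: contradiction with hole-freeness
      exfalso
      push_neg at hgap
      obtain ⟨g, hgrange, hgV⟩ := hgap
      have hgt : g ≠ t.val.1 := by
        intro h
        exact hgV (by rw [show ((g : ℤ), b0 + 1) = t.val from Prod.ext h httop.symm]; exact t.2)
      have hgs : g ≠ s.val.1 := by
        intro h
        exact hgV (by rw [show ((g : ℤ), b0 + 1) = s.val from Prod.ext h hstop.symm]; exact s.2)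
      set B := SimpleGraph.Walk.cons htp (mid.append (SimpleGraph.Walk.cons hqs ρ))
        with hBdef
      have hBV : ∀ w ∈ B.support, w ∈ V := by
        intro w hw
        rw [hBdef, SimpleGraph.Walk.support_cons] at hw
        rcases List.mem_cons.mp hw with rfl | hw
        · exact t.2
        · rcases (SimpleGraph.Walk.mem_support_append_iff _ _).mp hw with hw | hw
          · rw [show w = (w.1, b0) from Prod.ext rfl (hmidsup w hw).1]
            exact hPV w.1 (hmidsup w hw).2.1 (hmidsup w hw).2.2
          · rw [SimpleGraph.Walk.support_cons] at hw
            rcases List.mem_cons.mp hw with rfl | hw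
            · exact q.2
            · exact (hρ w hw).1
      have hwind1 : windWalk (g, b0 + 1) B = 0 := wind_zero_of_notin hfin hnohole B hBV hgV
      have hwind2 : windWalk (a0 - 1, b0) B = 0 := wind_zero_of_notin hfin hnohole B hBV hgl
      have htel : stepSum (fun x y => indW a0 b0 y - indW a0 b0 x) B = 0 := by
        rw [stepSum_eq_of_telescope _ (indW a0 b0) B (fun x y _ _ _ => rfl)]
        ring
      have hDA_sum : stepSum (DA a0 b0 g) B = 0 := by
        have heq : stepSum (DA a0 b0 g) B =
            stepSum (windStep (g, b0 + 1)) B - stepSum (windStep (a0 - 1, b0)) B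
            + stepSum (fun x y => indW a0 b0 y - indW a0 b0 x) B := by
          rw [← stepSum_sub, ← stepSum_add]
          rfl
        rw [heq, htel]
        have e1 : stepSum (windStep (g, b0 + 1)) B = windWalk (g, b0 + 1) B := rfl
        have e2 : stepSum (windStep (a0 - 1, b0)) B = windWalk (a0 - 1, b0) B := rfl
        rw [e1, e2, hwind1, hwind2]
        ring
      -- structural evaluation
      have hga : a0 - 1 ≤ g := by
        have := hp.2.1; have := hq.2.1
        omega
      have hgb : g ≤ a1 := by
        have := hp.2.2; have := hq.2.2
        omega
      have hmid_zero : stepSum (DA a0 b0 g) mid = 0 := by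
        apply stepSum_eq_zero
        intro x y hxy hx hy
        exact DA_mid a0 b0 g x y hxy ⟨(hmidsup x hx).1, (hmidsup x hx).2.1⟩
          ⟨(hmidsup y hy).1, (hmidsup y hy).2.1⟩
      have hrho_zero : stepSum (DA a0 b0 g) ρ = 0 := by
        apply stepSum_eq_zero
        intro x y hxy hx hy
        exact DA_rho a0 a1 b0 g x y hxy hga hgb
          (fun h => hWE x (hρ x hx).1 (hρ x hx).2 h)
          (fun h => hWE y (hρ y hy).1 (hρ y hy).2 h)
      have hstruct : stepSum (DA a0 b0 g) B =
          DA a0 b0 g t.val p.val + stepSum (DA a0 b0 g) mid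
          + (DA a0 b0 g q.val s.val + stepSum (DA a0 b0 g) ρ) := by
        rw [hBdef, stepSum_cons, stepSum_append, stepSum_cons]
        ring
      rw [hDA_sum, hmid_zero, hrho_zero] at hstruct
      rw [DA_tp a0 b0 g t.val p.val htp httop hp.1 hp.2.1,
        DA_qs a0 b0 g q.val s.val hqs hq.1 hstop hq.2.1] at hstruct
      -- orientation facts
      have horient : (t.val.1 < g ∧ g < s.val.1) ∨ (s.val.1 < g ∧ g < t.val.1) := by
        rcases hgrange with h | h
        · left; constructor <;> omega
        · right; constructor <;> omega
      have hep : p.val.1 - 1 ≤ t.val.1 ∧ t.val.1 ≤ p.val.1 := by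
        have := hp.1; have := httop
        omega
      have hfq : q.val.1 - 1 ≤ s.val.1 ∧ s.val.1 ≤ q.val.1 := by
        have := hq.1; have := hstop
        omega
      split_ifs at hstruct <;> omega
  · -- s at the bottom : exfalso through z_r / z_l winding
    exfalso
    set B := SimpleGraph.Walk.cons htp (mid.append (SimpleGraph.Walk.cons hqs ρ))
      with hBdef
    have hBV : ∀ w ∈ B.support, w ∈ V := by
      intro w hw
      rw [hBdef, SimpleGraph.Walk.support_cons] at hw
      rcases List.mem_cons.mp hw with rfl | hw
      · exact t.2
      · rcases (SimpleGraph.Walk.mem_support_append_iff _ _).mp hw with hw | hw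
        · rw [show w = (w.1, b0) from Prod.ext rfl (hmidsup w hw).1]
          exact hPV w.1 (hmidsup w hw).2.1 (hmidsup w hw).2.2
        · rw [SimpleGraph.Walk.support_cons] at hw
          rcases List.mem_cons.mp hw with rfl | hw
          · exact q.2
          · exact (hρ w hw).1
    have hwind1 : windWalk (a1 + 1, b0) B = 0 := wind_zero_of_notin hfin hnohole B hBV hgr
    have hwind2 : windWalk (a0 - 1, b0) B = 0 := wind_zero_of_notin hfin hnohole B hBV hgl
    have haa : a0 ≤ a1 := by
      have := hp.2.1; have := hp.2.2
      omega
    have hDB_sum : stepSum (DB a0 a1 b0) B = 0 := by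
      have heq : stepSum (DB a0 a1 b0) B =
          stepSum (windStep (a1 + 1, b0)) B - stepSum (windStep (a0 - 1, b0)) B := by
        rw [← stepSum_sub]; rfl
      rw [heq]
      have e1 : stepSum (windStep (a1 + 1, b0)) B = windWalk (a1 + 1, b0) B := rfl
      have e2 : stepSum (windStep (a0 - 1, b0)) B = windWalk (a0 - 1, b0) B := rfl
      rw [e1, e2, hwind1, hwind2]
      ring
    have hmid_zero : stepSum (DB a0 a1 b0) mid = 0 := by
      apply stepSum_eq_zero
      intro x y hxy hx hy
      exact DB_mid a0 a1 b0 x y hxy (hmidsup x hx) (hmidsup y hy)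
    have hrho_zero : stepSum (DB a0 a1 b0) ρ = 0 := by
      apply stepSum_eq_zero
      intro x y hxy hx hy
      exact DB_rho a0 a1 b0 x y hxy haa
        (fun h => hWE x (hρ x hx).1 (hρ x hx).2 h)
        (fun h => hWE y (hρ y hy).1 (hρ y hy).2 h)
    have hstruct : stepSum (DB a0 a1 b0) B =
        DB a0 a1 b0 t.val p.val + stepSum (DB a0 a1 b0) mid
        + (DB a0 a1 b0 q.val s.val + stepSum (DB a0 a1 b0) ρ) := by
      rw [hBdef, stepSum_cons, stepSum_append, stepSum_cons]
      ring
    rw [hDB_sum, hmid_zero, hrho_zero,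
      DB_tp a0 a1 b0 t.val p.val htp httop hp.1 hp.2.1 hp.2.2,
      DB_qs a0 a1 b0 q.val s.val hqs hq.1 hsbot hq.2.1 hq.2.2] at hstruct
    omega


def autHom (φ : (ℤ×ℤ) ≃ (ℤ×ℤ)) (hφ : ∀ a b, triGrid.Adj a b ↔ triGrid.Adj (φ a) (φ b)) :
    triGrid →g triGrid := ⟨φ, fun {a b} h => (hφ a b).mp h⟩

def autIso (φ : (ℤ×ℤ) ≃ (ℤ×ℤ)) (hφ : ∀ a b, triGrid.Adj a b ↔ triGrid.Adj (φ a) (φ b))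
    (S : Set (ℤ×ℤ)) : (triGrid.induce S) ≃g (triGrid.induce (φ '' S)) where
  toEquiv := φ.image S
  map_rel_iff' := by
    intro a b
    exact (hφ a.val b.val).symm

def flipE : (ℤ×ℤ) ≃ (ℤ×ℤ) where
  toFun w := (w.1 + w.2, -w.2)
  invFun w := (w.1 + w.2, -w.2)
  left_inv w := by apply Prod.ext <;> simp <;> ring
  right_inv w := by apply Prod.ext <;> simp <;> ring

lemma flip_adj : ∀ a b : ℤ×ℤ, triGrid.Adj a b ↔ triGrid.Adj (flipE a) (flipE b) := by
  intro a b
  rw [adj_iff, adj_iff]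
  show _ ↔ ((a.1 + a.2 - (b.1 + b.2) = 1 ∧ _) ∨ _)
  simp only [flipE, Equiv.coe_fn_mk]
  omega

lemma Pmem_flip (a0 a1 b0 : ℤ) (w : ℤ×ℤ) :
    Pmem (a0 + b0) (a1 + b0) (-b0) (flipE w) ↔ Pmem a0 a1 b0 w := by
  simp only [Pmem, flipE, Equiv.coe_fn_mk]
  omega

lemma liftWalk_support' {S : Set (ℤ × ℤ)} {x y : S} (p : (triGrid.induce S).Walk x y) :
    ∀ w ∈ (liftWalk p).support, ∃ x ∈ p.support, x.val = w := by
  induction p with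
  | nil =>
      intro w hw
      simp only [liftWalk, SimpleGraph.Walk.support_nil, List.mem_singleton] at hw
      exact ⟨_, by simp, hw.symm⟩
  | @cons a c b h p ih =>
      intro w hw
      simp only [liftWalk, SimpleGraph.Walk.support_cons, List.mem_cons] at hw
      change w ∈ (a.val :: (liftWalk p).support) at hw
      rw [List.mem_cons] at hw
      rcases hw with rfl | hw
      · exact ⟨a, by simp, rfl⟩
      · obtain ⟨x, hx, hxw⟩ := ih w hw
        exact ⟨x, by simp [hx], hxw⟩

lemma main_pre (V : Set (ℤ × ℤ)) (hfin : V.Finite)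
    (hnohole : (triGrid.induce Vᶜ).Connected)
    (a0 a1 b0 : ℤ) (hPV : ∀ x : ℤ, a0 ≤ x → x ≤ a1 → (x, b0) ∈ V)
    (hgl : (a0 - 1, b0) ∉ V) (hgr : (a1 + 1, b0) ∉ V)
    (u v : V) (γ : (triGrid.induce V).Walk u v)
    (ρuv : triGrid.Walk u.val v.val)
    (hρuv : ∀ w ∈ ρuv.support, w ∈ V ∧ ¬ Pmem a0 a1 b0 w)
    (htouch : ∃ w ∈ γ.support, Pmem a0 a1 b0 w.val) :
    ∃ W : (triGrid.induce V).Walk u v, W.length < γ.length := by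
  classical
  have hu : ¬ Pmem a0 a1 b0 u.val :=
    (hρuv u.val (SimpleGraph.Walk.start_mem_support ρuv)).2
  have hv : ¬ Pmem a0 a1 b0 v.val :=
    (hρuv v.val (SimpleGraph.Walk.end_mem_support ρuv)).2
  obtain ⟨t, p, q, s, h1, h2, w1, w2, w3, hlen, hQp, hQq, hQt, hQs, hfree1, hfree3⟩ :=
    exists_decomp (G := triGrid.induce V) (fun x => Pmem a0 a1 b0 x.val) γ hu hv htouch
  -- the return walk from s to t avoiding the portal
  set ρ : triGrid.Walk s.val t.val :=
    (liftWalk w3).append (ρuv.reverse.append (liftWalk w1)) with hρdef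
  have hρ : ∀ w ∈ ρ.support, w ∈ V ∧ ¬ Pmem a0 a1 b0 w := by
    intro w hw
    rw [hρdef] at hw
    rcases (SimpleGraph.Walk.mem_support_append_iff _ _).mp hw with hw | hw
    · obtain ⟨x, hx, rfl⟩ := liftWalk_support' w3 w hw
      exact ⟨x.2, hfree3 x hx⟩
    · rcases (SimpleGraph.Walk.mem_support_append_iff _ _).mp hw with hw | hw
      · rw [SimpleGraph.Walk.support_reverse, List.mem_reverse] at hw
        exact hρuv w hw
      · obtain ⟨x, hx, rfl⟩ := liftWalk_support' w1 w hw
        exact ⟨x.2, hfree1 x hx⟩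
  -- t is on the top row or the bottom row
  have hWE : ∀ w : ℤ × ℤ, w ∈ V → ¬ Pmem a0 a1 b0 w → w.2 = b0 →
      (w.1 ≤ a0 - 2 ∨ a1 + 2 ≤ w.1) := by
    intro w hwV hwP hw2
    by_contra hcon
    push_neg at hcon
    have hw1 : w.1 = a0 - 1 ∨ w.1 = a1 + 1 := by
      simp only [Pmem, not_and, not_le] at hwP
      omega
    rcases hw1 with h | h
    · exact hgl (by rw [show ((a0 - 1 : ℤ), b0) = w from (Prod.ext h hw2).symm]; exact hwV)
    · exact hgr (by rw [show ((a1 + 1 : ℤ), b0) = w from (Prod.ext h hw2).symm]; exact hwV)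
  have htp : triGrid.Adj t.val p.val := h1
  have ht2 : t.val.2 = b0 + 1 ∨ t.val.2 = b0 - 1 := by
    have hadj := adj_iff.mp htp
    by_cases h : t.val.2 = b0
    · exfalso
      have h1' : t.val.1 ≤ a0 - 2 ∨ a1 + 2 ≤ t.val.1 := hWE t.val t.2 hQt h
      have := hQp.1; have := hQp.2.1; have := hQp.2.2
      omega
    · have := hQp.1
      omega
  have hlen' : w1.length + 1 + w2.length + 1 + w3.length = γ.length := hlen.symm
  rcases ht2 with httop | htbot
  · obtain ⟨W, hW⟩ := inner_top V hfin hnohole a0 a1 b0 hPV hgl hgr u v t p q s h1 h2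
      w1 w2 w3 hQp hQq ρ hρ httop hQs
    exact ⟨W, by omega⟩
  · -- flip vertically and use inner_top on the mirrored configuration
    set φ := flipE with hφdef
    have hφ := flip_adj
    set ι := autIso φ hφ V with hιdef
    have himgval : ∀ x : V, (ι x).val = φ x.val := fun x => rfl
    have hnohole' : (triGrid.induce ((φ '' V)ᶜ)).Connected := by
      have h := ((autIso φ hφ (Vᶜ)).connected_iff).mp hnohole
      rwa [Equiv.image_compl] at h
    have hPV' : ∀ x : ℤ, a0 + b0 ≤ x → x ≤ a1 + b0 → (x, -b0) ∈ φ '' V := by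
      intro x hx1 hx2
      refine ⟨(x - b0, b0), hPV (x - b0) (by omega) (by omega), ?_⟩
      show ((x - b0) + b0, -b0) = (x, -b0)
      rw [Prod.mk.injEq]; exact ⟨by ring, rfl⟩
    have hgl' : ((a0 + b0) - 1, -b0) ∉ φ '' V := by
      rintro ⟨w, hwV, hww⟩
      apply hgl
      have : w = (a0 - 1, b0) := by
        have h1' : w.1 + w.2 = a0 + b0 - 1 := congrArg Prod.fst hww
        have h2' : -w.2 = -b0 := congrArg Prod.snd hww
        exact Prod.ext (by omega) (by omega)
      exact this ▸ hwV
    have hgr' : ((a1 + b0) + 1, -b0) ∉ φ '' V := by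
      rintro ⟨w, hwV, hww⟩
      apply hgr
      have : w = (a1 + 1, b0) := by
        have h1' : w.1 + w.2 = a1 + b0 + 1 := congrArg Prod.fst hww
        have h2' : -w.2 = -b0 := congrArg Prod.snd hww
        exact Prod.ext (by omega) (by omega)
      exact this ▸ hwV
    have hρ' : ∀ w ∈ (ρ.map (autHom φ hφ)).support, w ∈ φ '' V ∧
        ¬ Pmem (a0 + b0) (a1 + b0) (-b0) w := by
      intro w hw
      rw [SimpleGraph.Walk.support_map, List.mem_map] at hw
      obtain ⟨x, hx, rfl⟩ := hw
      refine ⟨⟨x, (hρ x hx).1, rfl⟩, ?_⟩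
      show ¬ Pmem (a0 + b0) (a1 + b0) (-b0) (flipE x)
      rw [Pmem_flip]
      exact (hρ x hx).2
    have httop' : (ι t).val.2 = -b0 + 1 := by
      rw [himgval]
      show -t.val.2 = -b0 + 1
      omega
    have hsP' : ¬ Pmem (a0 + b0) (a1 + b0) (-b0) (ι s).val := by
      rw [himgval, Pmem_flip]
      exact hQs
    have hp' : Pmem (a0 + b0) (a1 + b0) (-b0) (ι p).val := by
      rw [himgval, Pmem_flip]; exact hQp
    have hq' : Pmem (a0 + b0) (a1 + b0) (-b0) (ι q).val := by
      rw [himgval, Pmem_flip]; exact hQq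
    obtain ⟨W', hW'⟩ := inner_top (φ '' V) (hfin.image φ) hnohole'
      (a0 + b0) (a1 + b0) (-b0) hPV' hgl' hgr'
      (ι u) (ι v) (ι t) (ι p) (ι q) (ι s)
      (ι.map_rel_iff.mpr h1) (ι.map_rel_iff.mpr h2)
      (w1.map ι.toHom) (w2.map ι.toHom) (w3.map ι.toHom)
      hp' hq' (ρ.map (autHom φ hφ)) hρ' httop' hsP'
    refine ⟨(W'.map ι.symm.toHom).copy (ι.symm_apply_apply u) (ι.symm_apply_apply v), ?_⟩
    rw [SimpleGraph.Walk.length_copy, SimpleGraph.Walk.length_map]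
    simp only [SimpleGraph.Walk.length_map] at hW'
    omega


def dirK : TriDir → ℤ × ℤ → ℤ
  | .x, w => w.2
  | .y, w => w.1
  | .z, w => w.1 + w.2

def dirP : TriDir → ℤ × ℤ → ℤ
  | .x, w => w.1
  | .y, w => w.2
  | .z, w => w.1

def dirRecon : TriDir → ℤ → ℤ → ℤ × ℤ
  | .x, k, p => (p, k)
  | .y, k, p => (k, p)
  | .z, k, p => (p, k - p)

lemma dirK_recon (d : TriDir) (k p : ℤ) : dirK d (dirRecon d k p) = k := by
  cases d <;> simp [dirK, dirRecon] <;> ring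

lemma dirP_recon (d : TriDir) (k p : ℤ) : dirP d (dirRecon d k p) = p := by
  cases d <;> simp [dirP, dirRecon]

lemma recon_eta (d : TriDir) (w : ℤ × ℤ) : dirRecon d (dirK d w) (dirP d w) = w := by
  cases d <;> simp [dirK, dirP, dirRecon] <;> apply Prod.ext <;> simp <;> ring

lemma dirAdj_iff (d : TriDir) (a b : ℤ × ℤ) : (triDirSub d).Adj a b ↔
    (dirK d a = dirK d b ∧ (dirP d a - dirP d b = 1 ∨ dirP d b - dirP d a = 1)) := by
  cases d <;>
    (show (a.1 - b.1, a.2 - b.2) ∈ _ ↔ _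
     simp only [TriDir.vecs, Set.mem_insert_iff, Set.mem_singleton_iff, Prod.mk.injEq,
       dirK, dirP]
     omega)

lemma dirK_walk {d : TriDir} {V : Set (ℤ × ℤ)} :
    ∀ {x y : V} (_ : ((triDirSub d).induce V).Walk x y), dirK d x.val = dirK d y.val := by
  intro x y w
  induction w with
  | nil => rfl
  | @cons a m b h w ih =>
      have hd := (dirAdj_iff d a.val m.val).mp h
      exact hd.1.trans ih

lemma dirP_ivt {d : TriDir} {V : Set (ℤ × ℤ)} :
    ∀ {x y : V} (w : ((triDirSub d).induce V).Walk x y) (c : ℤ),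
      ((dirP d x.val ≤ c ∧ c ≤ dirP d y.val) ∨ (dirP d y.val ≤ c ∧ c ≤ dirP d x.val)) →
      ∃ z ∈ w.support, dirP d z.val = c := by
  intro x y w
  induction w with
  | @nil a =>
      intro c hc
      exact ⟨a, by simp, by omega⟩
  | @cons a m b h w ih =>
      intro c hc
      have hd := (dirAdj_iff d a.val m.val).mp h
      by_cases hcm : (dirP d m.val ≤ c ∧ c ≤ dirP d b.val) ∨
          (dirP d b.val ≤ c ∧ c ≤ dirP d m.val)
      · obtain ⟨z, hz, hzc⟩ := ih c hcm
        exact ⟨z, by simp [hz], hzc⟩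
      · have hca : dirP d a.val = c := by omega
        exact ⟨a, by simp, hca⟩

lemma portal_struct (V : Set (ℤ × ℤ)) (hfin : V.Finite) (d : TriDir)
    (C : ((triDirSub d).induce V).ConnectedComponent) :
    ∃ (k0 a0 a1 : ℤ), a0 ≤ a1 ∧
      (∀ w : ℤ × ℤ, w ∈ Subtype.val '' C.supp ↔
        (dirK d w = k0 ∧ a0 ≤ dirP d w ∧ dirP d w ≤ a1)) ∧
      dirRecon d k0 (a0 - 1) ∉ V ∧ dirRecon d k0 (a1 + 1) ∉ V := by
  classical
  obtain ⟨r, hr0⟩ := C.exists_rep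
  have hr : ((triDirSub d).induce V).connectedComponentMk r = C := hr0
  have hsupp : ∀ x : V, x ∈ C.supp ↔ ((triDirSub d).induce V).Reachable x r := by
    intro x
    rw [SimpleGraph.ConnectedComponent.mem_supp_iff, ← hr]
    exact SimpleGraph.ConnectedComponent.eq
  set k0 := dirK d r.val with hk0
  -- all component members have invariant k and are in V
  have hmemK : ∀ w ∈ Subtype.val '' C.supp, dirK d w = k0 := by
    rintro w ⟨x, hx, rfl⟩
    obtain ⟨q⟩ := (hsupp x).mp hx
    exact dirK_walk q
  -- the set of positions
  have hTfin : (dirP d '' (Subtype.val '' C.supp)).Finite :=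
    ((hfin.subset (by rintro w ⟨x, _, rfl⟩; exact x.2)).image _)
  have hTne : (dirP d '' (Subtype.val '' C.supp)).Nonempty :=
    ⟨dirP d r.val, ⟨r.val, ⟨r, (hsupp r).mpr (Reachable.refl r), rfl⟩, rfl⟩⟩
  obtain ⟨a0, ha0T, ha0min⟩ := Set.exists_min_image _ id hTfin hTne
  obtain ⟨a1, ha1T, ha1max⟩ := Set.exists_max_image _ id hTfin hTne
  have hTmem : ∀ c ∈ dirP d '' (Subtype.val '' C.supp), a0 ≤ c ∧ c ≤ a1 := by
    intro c hc
    exact ⟨ha0min c hc, ha1max c hc⟩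
  obtain ⟨wmin, hwmin, hwminP⟩ : ∃ x, x ∈ Subtype.val '' C.supp ∧ dirP d x = a0 := by
    obtain ⟨x, hx, hxp⟩ := ha0T
    exact ⟨x, hx, hxp⟩
  obtain ⟨wmax, hwmax, hwmaxP⟩ : ∃ x, x ∈ Subtype.val '' C.supp ∧ dirP d x = a1 := by
    obtain ⟨x, hx, hxp⟩ := ha1T
    exact ⟨x, hx, hxp⟩
  obtain ⟨xmin, hxmin, hxminv⟩ := hwmin
  obtain ⟨xmax, hxmax, hxmaxv⟩ := hwmax
  -- the full characterization
  have hchar : ∀ w : ℤ × ℤ, w ∈ Subtype.val '' C.supp ↔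
      (dirK d w = k0 ∧ a0 ≤ dirP d w ∧ dirP d w ≤ a1) := by
    intro w
    constructor
    · intro hw
      refine ⟨hmemK w hw, ?_⟩
      exact hTmem _ ⟨w, hw, rfl⟩
    · rintro ⟨hk, hb1, hb2⟩
      -- walk from xmin to xmax
      obtain ⟨q⟩ : ((triDirSub d).induce V).Reachable xmin xmax :=
        ((hsupp xmin).mp hxmin).trans ((hsupp xmax).mp hxmax).symm
      obtain ⟨z, hz, hzP⟩ := dirP_ivt q (dirP d w)
        (by rw [hxminv, hxmaxv, hwminP, hwmaxP]; left; exact ⟨hb1, hb2⟩)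
      have hzsupp : z ∈ C.supp := by
        rw [hsupp]
        exact (Reachable.symm ⟨q.takeUntil z hz⟩).trans ((hsupp xmin).mp hxmin)
      have hzk : dirK d z.val = k0 := hmemK z.val ⟨z, hzsupp, rfl⟩
      have : z.val = w := by
        have e1 := recon_eta d z.val
        have e2 := recon_eta d w
        rw [hzk, hzP] at e1
        rw [hk] at e2
        exact e1.symm.trans e2
      exact ⟨z, hzsupp, this⟩
  refine ⟨k0, a0, a1, ?_, hchar, ?_, ?_⟩
  · have := hTmem _ ⟨r.val, ⟨r, (hsupp r).mpr (Reachable.refl r), rfl⟩, rfl⟩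
    omega
  · -- left guard
    intro hguard
    have hpmin : dirP d xmin.val = a0 := by rw [hxminv]; exact hwminP
    have hadj0 : (triDirSub d).Adj (dirRecon d k0 (a0 - 1)) xmin.val := by
      rw [dirAdj_iff]
      refine ⟨?_, ?_⟩
      · rw [dirK_recon, hmemK xmin.val ⟨xmin, hxmin, rfl⟩]
      · right; rw [dirP_recon, hpmin]; ring
    have hadj : ((triDirSub d).induce V).Adj ⟨dirRecon d k0 (a0 - 1), hguard⟩ xmin := hadj0
    have hin : dirRecon d k0 (a0 - 1) ∈ Subtype.val '' C.supp := by
      refine ⟨⟨dirRecon d k0 (a0 - 1), hguard⟩, ?_, rfl⟩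
      rw [hsupp]
      exact (hadj.reachable).trans ((hsupp xmin).mp hxmin)
    have := (hchar _).mp hin
    rw [dirP_recon] at this
    omega
  · -- right guard
    intro hguard
    have hpmax : dirP d xmax.val = a1 := by rw [hxmaxv]; exact hwmaxP
    have hadj0 : (triDirSub d).Adj (dirRecon d k0 (a1 + 1)) xmax.val := by
      rw [dirAdj_iff]
      refine ⟨?_, ?_⟩
      · rw [dirK_recon, hmemK xmax.val ⟨xmax, hxmax, rfl⟩]
      · left; rw [dirP_recon, hpmax]; ring
    have hadj : ((triDirSub d).induce V).Adj ⟨dirRecon d k0 (a1 + 1), hguard⟩ xmax := hadj0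
    have hin : dirRecon d k0 (a1 + 1) ∈ Subtype.val '' C.supp := by
      refine ⟨⟨dirRecon d k0 (a1 + 1), hguard⟩, ?_, rfl⟩
      rw [hsupp]
      exact (hadj.reachable).trans ((hsupp xmax).mp hxmax)
    have := (hchar _).mp hin
    rw [dirP_recon] at this
    omega

def dirEquiv : TriDir → (ℤ × ℤ) ≃ (ℤ × ℤ)
  | .x => Equiv.refl _
  | .y => ⟨fun w => (w.2, w.1), fun w => (w.2, w.1), fun w => rfl, fun w => rfl⟩
  | .z => ⟨fun w => (-w.2, w.1 + w.2), fun w => (w.1 + w.2, -w.1),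
      fun w => by apply Prod.ext <;> simp,
      fun w => by apply Prod.ext <;> simp⟩

def dirOff : TriDir → ℤ
  | .x => 0
  | .y => 0
  | .z => 1

lemma dirEquiv_fst (d : TriDir) (w : ℤ × ℤ) :
    (dirEquiv d w).1 = dirP d w - dirOff d * dirK d w := by
  cases d <;> simp [dirEquiv, dirP, dirK, dirOff] <;> ring

lemma dirEquiv_snd (d : TriDir) (w : ℤ × ℤ) :
    (dirEquiv d w).2 = dirK d w := by
  cases d <;> simp [dirEquiv, dirK]

lemma dirEquiv_adj (d : TriDir) : ∀ a b : ℤ × ℤ,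
    triGrid.Adj a b ↔ triGrid.Adj (dirEquiv d a) (dirEquiv d b) := by
  intro a b
  rw [adj_iff, adj_iff]
  cases d <;>
    simp only [dirEquiv, Equiv.coe_fn_mk, Equiv.refl_apply] <;> omega

lemma restrictWalk {V P : Set (ℤ × ℤ)} :
    ∀ {x y : V} (w : (triGrid.induce V).Walk x y), (∀ z ∈ w.support, z.val ∉ P) →
    ∀ (hx : x.val ∈ V \ P) (hy : y.val ∈ V \ P),
      Nonempty ((triGrid.induce (V \ P)).Walk ⟨x.val, hx⟩ ⟨y.val, hy⟩) := by
  intro x y w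
  induction w with
  | nil =>
      intro h hx hy
      exact ⟨SimpleGraph.Walk.nil.copy rfl (Subtype.ext rfl)⟩
  | @cons a c b hadj w ih =>
      intro h hx hy
      have hc : c.val ∈ V \ P := ⟨c.2, h c (by simp)⟩
      obtain ⟨w'⟩ := ih (fun z hz => h z (by simp [hz])) hc hy
      exact ⟨SimpleGraph.Walk.cons (by exact hadj) w'⟩


end PortalProof


theorem shortest_path_through_portal_iff' (V : Set (ℤ × ℤ)) (hfin : V.Finite)
    (hconn : (triGrid.induce V).Connected)
    (hnohole : (triGrid.induce Vᶜ).Connected)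
    (d : TriDir) (C : ((triDirSub d).induce V).ConnectedComponent)
    (P : Set (ℤ × ℤ)) (hP : P = Subtype.val '' C.supp)
    (u v : ℤ × ℤ) (hu : u ∈ V) (hv : v ∈ V) (hup : u ∉ P) (hvp : v ∉ P) :
    ((∃ p : (triGrid.induce V).Walk ⟨u, hu⟩ ⟨v, hv⟩,
        p.length = (triGrid.induce V).dist ⟨u, hu⟩ ⟨v, hv⟩ ∧
        ∃ w ∈ p.support, w.val ∈ P) ↔
      ¬ (triGrid.induce (V \ P)).Reachable ⟨u, ⟨hu, hup⟩⟩ ⟨v, ⟨hv, hvp⟩⟩) ∧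
    ((triGrid.induce (V \ P)).Reachable ⟨u, ⟨hu, hup⟩⟩ ⟨v, ⟨hv, hvp⟩⟩ →
      ∀ p : (triGrid.induce V).Walk ⟨u, hu⟩ ⟨v, hv⟩,
        p.length = (triGrid.induce V).dist ⟨u, hu⟩ ⟨v, hv⟩ →
        ∀ w ∈ p.support, w.val ∉ P) := by
  classical
  open PortalProof in
  obtain ⟨k0, a0, a1, haa, hchar, hg1, hg2⟩ := PortalProof.portal_struct V hfin d C
  have hPiff : ∀ w : ℤ × ℤ, w ∈ P ↔
      (PortalProof.dirK d w = k0 ∧ a0 ≤ PortalProof.dirP d w ∧ PortalProof.dirP d w ≤ a1) := by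
    intro w; rw [hP]; exact hchar w
  have hPsub : P ⊆ V := by
    intro w hw
    rw [hP] at hw
    obtain ⟨x, _, rfl⟩ := hw
    exact x.2
  set σ := PortalProof.dirEquiv d with hσdef
  have hσ := PortalProof.dirEquiv_adj d
  set ι := PortalProof.autIso σ hσ V with hιdef
  set a0' := a0 - PortalProof.dirOff d * k0 with ha0'
  set a1' := a1 - PortalProof.dirOff d * k0 with ha1'
  have hPmem_iff : ∀ w : ℤ × ℤ, PortalProof.Pmem a0' a1' k0 (σ w) ↔ w ∈ P := by
    intro w
    rw [hPiff]
    unfold PortalProof.Pmem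
    rw [PortalProof.dirEquiv_fst, PortalProof.dirEquiv_snd]
    constructor
    · rintro ⟨h1, h2, h3⟩
      rw [h1] at h2 h3
      exact ⟨h1, by omega, by omega⟩
    · rintro ⟨h1, h2, h3⟩
      rw [h1]
      exact ⟨rfl, by omega, by omega⟩
  have hPV' : ∀ x : ℤ, a0' ≤ x → x ≤ a1' → (x, k0) ∈ σ '' V := by
    intro x h1 h2
    refine ⟨PortalProof.dirRecon d k0 (x + PortalProof.dirOff d * k0), ?_, ?_⟩
    · apply hPsub
      rw [hPiff, PortalProof.dirK_recon, PortalProof.dirP_recon]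
      exact ⟨rfl, by omega, by omega⟩
    · have e1 : (σ (PortalProof.dirRecon d k0 (x + PortalProof.dirOff d * k0))).1 = x := by
        rw [PortalProof.dirEquiv_fst, PortalProof.dirP_recon, PortalProof.dirK_recon]; ring
      have e2 : (σ (PortalProof.dirRecon d k0 (x + PortalProof.dirOff d * k0))).2 = k0 := by
        rw [PortalProof.dirEquiv_snd, PortalProof.dirK_recon]
      exact Prod.ext e1 e2
  have hgl' : ((a0' - 1 : ℤ), k0) ∉ σ '' V := by
    rintro ⟨w, hwV, hww⟩
    apply hg1
    have h1 : PortalProof.dirK d w = k0 := by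
      have := congrArg Prod.snd hww
      rwa [PortalProof.dirEquiv_snd] at this
    have h2 : PortalProof.dirP d w = a0 - 1 := by
      have := congrArg Prod.fst hww
      rw [PortalProof.dirEquiv_fst, h1] at this
      simp only at this
      omega
    rw [show PortalProof.dirRecon d k0 (a0 - 1) = w from by
      rw [← h1, ← h2, PortalProof.recon_eta]]
    exact hwV
  have hgr' : ((a1' + 1 : ℤ), k0) ∉ σ '' V := by
    rintro ⟨w, hwV, hww⟩
    apply hg2
    have h1 : PortalProof.dirK d w = k0 := by
      have := congrArg Prod.snd hww
      rwa [PortalProof.dirEquiv_snd] at this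
    have h2 : PortalProof.dirP d w = a1 + 1 := by
      have := congrArg Prod.fst hww
      rw [PortalProof.dirEquiv_fst, h1] at this
      simp only at this
      omega
    rw [show PortalProof.dirRecon d k0 (a1 + 1) = w from by
      rw [← h1, ← h2, PortalProof.recon_eta]]
    exact hwV
  have hnohole' : (triGrid.induce ((σ '' V)ᶜ)).Connected := by
    have h := ((PortalProof.autIso σ hσ (Vᶜ)).connected_iff).mp hnohole
    rwa [Equiv.image_compl] at h
  have key : ∀ (γ : (triGrid.induce V).Walk ⟨u, hu⟩ ⟨v, hv⟩),
      (triGrid.induce (V \ P)).Reachable ⟨u, ⟨hu, hup⟩⟩ ⟨v, ⟨hv, hvp⟩⟩ →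
      (∃ w ∈ γ.support, w.val ∈ P) →
      ∃ W : (triGrid.induce V).Walk ⟨u, hu⟩ ⟨v, hv⟩, W.length < γ.length := by
    intro γ hreach htouch
    obtain ⟨π0⟩ := hreach
    have hρ0 : ∀ w ∈ (PortalProof.liftWalk π0).support, w ∈ V ∧ w ∉ P := by
      intro w hw
      have h1 := PortalProof.liftWalk_support π0 w hw
      exact ⟨h1.1, h1.2⟩
    obtain ⟨W', hW'⟩ := PortalProof.main_pre (σ '' V) (hfin.image σ) hnohole'
      a0' a1' k0 hPV' hgl' hgr' (ι ⟨u, hu⟩) (ι ⟨v, hv⟩)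
      (γ.map ι.toHom)
      ((PortalProof.liftWalk π0).map (PortalProof.autHom σ hσ))
      (by intro w hw
          replace hw := List.mem_map.mp
            (Eq.mp (congrArg (w ∈ ·) (SimpleGraph.Walk.support_map _ _)) hw)
          obtain ⟨x, hx, rfl⟩ := hw
          refine ⟨⟨x, (hρ0 x hx).1, rfl⟩, ?_⟩
          show ¬ PortalProof.Pmem a0' a1' k0 (σ x)
          rw [hPmem_iff]
          exact (hρ0 x hx).2)
      (by obtain ⟨w, hw, hwP⟩ := htouch
          refine ⟨ι w, ?_, ?_⟩
          · rw [SimpleGraph.Walk.support_map, List.mem_map]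
            exact ⟨w, hw, rfl⟩
          · show PortalProof.Pmem a0' a1' k0 (σ w.val)
            rw [hPmem_iff]
            exact hwP)
    refine ⟨(W'.map ι.symm.toHom).copy (ι.symm_apply_apply _) (ι.symm_apply_apply _), ?_⟩
    rw [SimpleGraph.Walk.length_copy, SimpleGraph.Walk.length_map]
    rw [SimpleGraph.Walk.length_map] at hW'
    exact hW'
  have part2 : (triGrid.induce (V \ P)).Reachable ⟨u, ⟨hu, hup⟩⟩ ⟨v, ⟨hv, hvp⟩⟩ →
      ∀ p : (triGrid.induce V).Walk ⟨u, hu⟩ ⟨v, hv⟩,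
        p.length = (triGrid.induce V).dist ⟨u, hu⟩ ⟨v, hv⟩ →
        ∀ w ∈ p.support, w.val ∉ P := by
    intro hreach p hl w hw hwP
    obtain ⟨W, hW⟩ := key p hreach ⟨w, hw, hwP⟩
    have hd := SimpleGraph.dist_le W
    omega
  refine ⟨⟨?_, ?_⟩, part2⟩
  · rintro ⟨p, hl, w, hw, hwP⟩ hreach
    exact part2 hreach p hl w hw hwP
  · intro hnreach
    obtain ⟨p, hp⟩ := hconn.exists_walk_length_eq_dist ⟨u, hu⟩ ⟨v, hv⟩
    refine ⟨p, hp, ?_⟩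
    by_contra hno
    push_neg at hno
    obtain ⟨W⟩ := PortalProof.restrictWalk p hno ⟨hu, hup⟩ ⟨hv, hvp⟩
    exact hnreach ⟨W⟩


/-- Portal separation: for `u, v ∉ P`, some shortest `u`-`v` path passes through the
portal `P` iff `u` and `v` lie in different connected components of `G - P`; moreover,
if they lie in the same component, no shortest path between them passes through `P`. -/
theorem shortest_path_through_portal_iff (hfin : V.Finite)
    (hconn : (triGrid.induce V).Connected)
    (hnohole : (triGrid.induce Vᶜ).Connected)
    (d : TriDir) (C : ((triDirSub d).induce V).ConnectedComponent)
    (P : Set (ℤ × ℤ)) (hP : P = Subtype.val '' C.supp)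
    (u v : ℤ × ℤ) (hu : u ∈ V) (hv : v ∈ V) (hup : u ∉ P) (hvp : v ∉ P) :
    ((∃ p : (triGrid.induce V).Walk ⟨u, hu⟩ ⟨v, hv⟩,
        p.length = (triGrid.induce V).dist ⟨u, hu⟩ ⟨v, hv⟩ ∧
        ∃ w ∈ p.support, w.val ∈ P) ↔
      ¬ (triGrid.induce (V \ P)).Reachable ⟨u, ⟨hu, hup⟩⟩ ⟨v, ⟨hv, hvp⟩⟩) ∧
    ((triGrid.induce (V \ P)).Reachable ⟨u, ⟨hu, hup⟩⟩ ⟨v, ⟨hv, hvp⟩⟩ →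
      ∀ p : (triGrid.induce V).Walk ⟨u, hu⟩ ⟨v, hv⟩,
        p.length = (triGrid.induce V).dist ⟨u, hu⟩ ⟨v, hv⟩ →
        ∀ w ∈ p.support, w.val ∉ P) :=
  shortest_path_through_portal_iff' V hfin hconn hnohole d C P hP u v hu hv hup hvp
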